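/- arXiv:1710.04839 — 5 statements merged into one kernel-verified Lean document; each statement's English description precedes it below -/
import Mathlib

section
/- In the transactional C++ memory model, weak isolation follows from the other consistency axioms: if hb = (sw ∪ tsw ∪ po)⁺ with tsw = weaklift(ecom, stxn) ⊆ hb, and the axiom HbCom (irreflexive(hb ; com*)) holds, then acyclic(weaklift(com, stxn)) holds. -/
def relComp {E : Type*} (r s : E → E → Prop) : E → E → Prop :=
  fun a c => ∃ b, r a b ∧ s b c

def relDiff {E : Type*} (r t : E → E → Prop) : E → E → Prop :=
  fun a b => r a b ∧ ¬ t a b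

def reflCl {E : Type*} (t : E → E → Prop) : E → E → Prop :=
  fun a b => t a b ∨ a = b

def weaklift {E : Type*} (r t : E → E → Prop) : E → E → Prop :=
  relComp t (relComp (relDiff r t) t)

def stronglift {E : Type*} (r t : E → E → Prop) : E → E → Prop :=
  relComp (reflCl t) (relComp (relDiff r t) (reflCl t))

def relUnion {E : Type*} (r s : E → E → Prop) : E → E → Prop :=
  fun a b => r a b ∨ s a b

def acyclicRel {E : Type*} (r : E → E → Prop) : Prop :=
  Irreflexive (Relation.TransGen r)

theorem weaklift_mono {E : Type*} {r r' t : E → E → Prop} (h : ∀ a b, r a b → r' a b)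
    {a b : E} : weaklift r t a b → weaklift r' t a b := by
  rintro ⟨c, hac, d, ⟨hcd, hncd⟩, hdb⟩
  exact ⟨c, hac, d, ⟨h c d hcd, hncd⟩, hdb⟩

theorem acyclicRel.mono {E : Type*} {r s : E → E → Prop} (h : ∀ a b, r a b → s a b)
    (hs : acyclicRel s) : acyclicRel r :=
  fun a ha => hs a (Relation.TransGen.mono h a a ha)

theorem weak_isolation_from_cpp_axioms_general {E : Type*}
    (po rf co fr sw stxn : E → E → Prop) :
    let com : E → E → Prop := fun a b => rf a b ∨ co a b ∨ fr a b
    let ecom : E → E → Prop := fun a b => com a b ∨ relComp co rf a b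
    let tsw : E → E → Prop := weaklift ecom stxn
    let hb : E → E → Prop := Relation.TransGen (fun a b => sw a b ∨ tsw a b ∨ po a b)
    -- well-formedness: com is acyclic
    acyclicRel com →
    -- HbCom: irreflexive(hb ; com*)
    (∀ a, ¬ relComp hb (Relation.ReflTransGen com) a a) →
    acyclicRel (weaklift com stxn) := by
  intro com ecom tsw hb _ hHbCom
  -- HbCom with the empty `com*` step says that `hb` is irreflexive.
  have hb_acyclic : acyclicRel (fun a b => sw a b ∨ tsw a b ∨ po a b) :=
    fun a ha => hHbCom a ⟨a, ha, Relation.ReflTransGen.refl⟩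
  exact hb_acyclic.mono fun _ _ h => Or.inr (Or.inl (weaklift_mono (fun _ _ => Or.inl) h))

theorem weak_isolation_from_cpp_axioms {E : Type*}
    (po rf co fr sw stxn : E → E → Prop)
    (hstxnSym : ∀ a b, stxn a b → stxn b a)
    (hstxnTrans : ∀ a b c, stxn a b → stxn b c → stxn a c) :
    let com : E → E → Prop := fun a b => rf a b ∨ co a b ∨ fr a b
    let ecom : E → E → Prop := fun a b => com a b ∨ relComp co rf a b
    let tsw : E → E → Prop := weaklift ecom stxn
    let hb : E → E → Prop := Relation.TransGen (fun a b => sw a b ∨ tsw a b ∨ po a b)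
    -- well-formedness: com is acyclic
    acyclicRel com →
    -- HbCom: irreflexive(hb ; com*)
    (∀ a, ¬ relComp hb (Relation.ReflTransGen com) a a) →
    acyclicRel (weaklift com stxn) :=
  weak_isolation_from_cpp_axioms_general po rf co fr sw stxn
end

section
/- Lemma (non-atomic communication induces happens-before): in a race-free C++ execution with all atomics SC, com \ SC² ⊆ hb; i.e., any communication edge not between two SC events is a happens-before edge. -/
theorem nonatomic_com_in_hb {E : Type*}
    (SC : Set E) (sameThread : E → E → Prop)
    (po com cnf hb : E → E → Prop)
    -- HbCom
    (hHbCom : ∀ a, ¬ relComp hb (Relation.ReflTransGen com) a a)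
    -- NoRace: conflicting events not both SC are hb-ordered
    (hNoRace : ∀ a b, cnf a b → ¬ (a ∈ SC ∧ b ∈ SC) → hb a b ∨ hb b a)
    (hpohb : ∀ a b, po a b → hb a b)
    (hhbTrans : ∀ a b c, hb a b → hb b c → hb a c)
    -- same-thread com edges are po edges
    (hcomThread : ∀ a b, com a b → sameThread a b → po a b)
    (hcomCnf : ∀ a b, com a b → cnf a b) :
    ∀ a b, com a b → ¬ (a ∈ SC ∧ b ∈ SC) → hb a b := by
  intro a b hcom hnsc
  rcases hNoRace a b (hcomCnf a b hcom) hnsc with h | h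
  · exact h
  · exact absurd ⟨a, h, Relation.ReflTransGen.single hcom⟩ (hHbCom b)
end

section
/- Lemma (lifting happens-before through transactions): under the hypotheses that hb = (po ∪ rfsc ∪ tsw)⁺ with tsw = weaklift(ecom, stxn), that stxn is a partial equivalence relation with stxn ⊆ po ∪ po⁻¹ ∪ id restricted to threads, that no event in the domain of stxn is SC (so [domain(stxn)];rfsc = rfsc;[domain(stxn)] = ∅), and that stxn;(po\stxn) ⊆ po\stxn, (po\stxn);stxn ⊆ po\stxn, stxn;tsw ⊆ tsw, tsw;stxn ⊆ tsw: then stxn* ; (hb \ stxn) ; stxn* ⊆ hb \ stxn. -/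
/-! Since `t` is transitive, `t*` is `t` or equality. A single `t`-step can be pushed through
an `s⁺`-path one `s`-step at a time: composed with `t`, each `s`-step is either again an
`s`-step or collapses into `t`, and the path cannot collapse entirely because its endpoints
are not `t`-related. Symmetry of `t` is what keeps the endpoints of the extended path
outside `t`. -/

namespace Relation

variable {α : Type*} {s t : α → α → Prop} {a b c d : α}

theorem eq_or_of_reflTransGen (htrans : ∀ a b c, t a b → t b c → t a c)
    (h : ReflTransGen t a b) : a = b ∨ t a b := by
  induction h with
  | refl => exact .inl rfl
  | tail _ hcd ih =>
    rcases ih with rfl | hac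
    · exact .inr hcd
    · exact .inr (htrans _ _ _ hac hcd)

theorem TransGen.of_comp_head (hcomp : ∀ a b c, t a b → s b c → s a c ∨ t a c)
    (hab : t a b) (hbc : TransGen s b c) (hac : ¬ t a c) : TransGen s a c := by
  induction hbc using TransGen.head_induction_on generalizing a with
  | single hbc => exact (hcomp _ _ _ hab hbc).resolve_right hac |> .single
  | head hbd _ ih =>
    rcases hcomp _ _ _ hab hbd with had | had
    · exact .head had ‹_›
    · exact ih had hac

theorem TransGen.of_comp_tail (hcomp : ∀ a b c, s a b → t b c → s a c ∨ t a c)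
    (hab : TransGen s a b) (hbc : t b c) (hac : ¬ t a c) : TransGen s a c :=
  transGen_swap.1 <| TransGen.of_comp_head (s := Function.swap s) (t := Function.swap t)
    (fun _ _ _ h h' => hcomp _ _ _ h' h) hbc (transGen_swap.2 hab) hac

theorem not_of_reflTransGen_of_not (hsymm : ∀ a b, t a b → t b a)
    (htrans : ∀ a b c, t a b → t b c → t a c)
    (hab : ReflTransGen t a b) (hcd : ReflTransGen t c d) (hbc : ¬ t b c) : ¬ t a d := by
  intro had
  rcases eq_or_of_reflTransGen htrans hab with rfl | hab
  · rcases eq_or_of_reflTransGen htrans hcd with rfl | hcd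
    · exact hbc had
    · exact hbc (htrans _ _ _ had (hsymm _ _ hcd))
  · rcases eq_or_of_reflTransGen htrans hcd with rfl | hcd
    · exact hbc (htrans _ _ _ (hsymm _ _ hab) had)
    · exact hbc (htrans _ _ _ (htrans _ _ _ (hsymm _ _ hab) had) (hsymm _ _ hcd))

theorem relDiff_transGen_of_relComp_reflTransGen (hsymm : ∀ a b, t a b → t b a)
    (htrans : ∀ a b c, t a b → t b c → t a c)
    (hhead : ∀ a b c, t a b → s b c → s a c ∨ t a c)
    (htail : ∀ a b c, s a b → t b c → s a c ∨ t a c)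
    (h : relComp (ReflTransGen t) (relComp (relDiff (TransGen s) t) (ReflTransGen t)) a d) :
    relDiff (TransGen s) t a d := by
  obtain ⟨b, hab, c, ⟨hbc, hnbc⟩, hcd⟩ := h
  have hnad : ¬ t a d := not_of_reflTransGen_of_not hsymm htrans hab hcd hnbc
  have hnbd : ¬ t b d := not_of_reflTransGen_of_not hsymm htrans .refl hcd hnbc
  have hbd : TransGen s b d := by
    rcases eq_or_of_reflTransGen htrans hcd with rfl | hcd
    · exact hbc
    · exact hbc.of_comp_tail htail hcd hnbd
  refine ⟨?_, hnad⟩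
  rcases eq_or_of_reflTransGen htrans hab with rfl | hab
  · exact hbd
  · exact hbd.of_comp_head hhead hab hnad

end Relation

theorem lift_hb_through_transactions_general {E : Type*}
    (po rfsc ecom stxn : E → E → Prop)
    (hstxnSym : ∀ a b, stxn a b → stxn b a)
    (hstxnTrans : ∀ a b c, stxn a b → stxn b c → stxn a c)
    -- no event in the domain of stxn is SC
    (hNoSCdom : ∀ a b, rfsc a b → (¬ ∃ c, stxn a c) ∧ (¬ ∃ c, stxn b c))
    -- transactions are po-contiguous / tsw relates whole transactions
    (hpo1 : ∀ a b c, stxn a b → (po b c ∧ ¬ stxn b c) → po a c ∧ ¬ stxn a c)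
    (hpo2 : ∀ a b c, (po a b ∧ ¬ stxn a b) → stxn b c → po a c ∧ ¬ stxn a c)
    (htsw1 : ∀ a b c, stxn a b → weaklift ecom stxn b c → weaklift ecom stxn a c)
    (htsw2 : ∀ a b c, weaklift ecom stxn a b → stxn b c → weaklift ecom stxn a c) :
    let tsw : E → E → Prop := weaklift ecom stxn
    let hb : E → E → Prop := Relation.TransGen (fun x y => po x y ∨ rfsc x y ∨ tsw x y)
    ∀ a b, relComp (Relation.ReflTransGen stxn)
        (relComp (relDiff hb stxn) (Relation.ReflTransGen stxn)) a b →
      relDiff hb stxn a b := by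
  intro tsw hb _ _
  refine Relation.relDiff_transGen_of_relComp_reflTransGen hstxnSym hstxnTrans ?_ ?_
  · rintro a b c hab (hpo | hrf | htsw)
    · by_cases hbc : stxn b c
      · exact .inr (hstxnTrans _ _ _ hab hbc)
      · exact .inl (.inl (hpo1 _ _ _ hab ⟨hpo, hbc⟩).1)
    · exact ((hNoSCdom _ _ hrf).1 ⟨a, hstxnSym _ _ hab⟩).elim
    · exact .inl (.inr (.inr (htsw1 _ _ _ hab htsw)))
  · rintro a b c (hpo | hrf | htsw) hbc
    · by_cases hab : stxn a b
      · exact .inr (hstxnTrans _ _ _ hab hbc)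
      · exact .inl (.inl (hpo2 _ _ _ ⟨hpo, hab⟩ hbc).1)
    · exact ((hNoSCdom _ _ hrf).2 ⟨c, hbc⟩).elim
    · exact .inl (.inr (.inr (htsw2 _ _ _ htsw hbc)))

theorem lift_hb_through_transactions {E : Type*}
    (po rfsc ecom stxn : E → E → Prop)
    (hstxnSym : ∀ a b, stxn a b → stxn b a)
    (hstxnTrans : ∀ a b c, stxn a b → stxn b c → stxn a c)
    -- stxn is within threads: stxn ⊆ po ∪ po⁻¹ ∪ id
    (hstxnPo : ∀ a b, stxn a b → po a b ∨ po b a ∨ a = b)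
    -- no event in the domain of stxn is SC
    (hNoSCdom : ∀ a b, rfsc a b → (¬ ∃ c, stxn a c) ∧ (¬ ∃ c, stxn b c))
    -- transactions are po-contiguous / tsw relates whole transactions
    (hpo1 : ∀ a b c, stxn a b → (po b c ∧ ¬ stxn b c) → po a c ∧ ¬ stxn a c)
    (hpo2 : ∀ a b c, (po a b ∧ ¬ stxn a b) → stxn b c → po a c ∧ ¬ stxn a c)
    (htsw1 : ∀ a b c, stxn a b → weaklift ecom stxn b c → weaklift ecom stxn a c)
    (htsw2 : ∀ a b c, weaklift ecom stxn a b → stxn b c → weaklift ecom stxn a c) :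
    let tsw : E → E → Prop := weaklift ecom stxn
    let hb : E → E → Prop := Relation.TransGen (fun x y => po x y ∨ rfsc x y ∨ tsw x y)
    ∀ a b, relComp (Relation.ReflTransGen stxn)
        (relComp (relDiff hb stxn) (Relation.ReflTransGen stxn)) a b →
      relDiff hb stxn a b :=
  lift_hb_through_transactions_general po rfsc ecom stxn hstxnSym hstxnTrans hNoSCdom hpo1 hpo2
    htsw1 htsw2
end

section
/- com⁺ = ecom ∪ (fr;rf): the transitive closure of com = rf ∪ co ∪ fr equals ecom ∪ (fr;rf) where ecom = com ∪ (co;rf), in any well-formed execution. -/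
theorem com_transGen_eq_ecom_union_fr_rf {E : Type*}
    (R W : Set E) (rf co fr : E → E → Prop)
    (hdisj : ∀ e, ¬ (e ∈ R ∧ e ∈ W))
    -- typing
    (hrf : ∀ a b, rf a b → a ∈ W ∧ b ∈ R)
    (hco : ∀ a b, co a b → a ∈ W ∧ b ∈ W)
    (hfr : ∀ a b, fr a b → a ∈ R ∧ b ∈ W)
    -- composition facts
    (hcoco : ∀ a b c, co a b → co b c → co a c)
    (hfrco : ∀ a b c, fr a b → co b c → fr a c)
    (hrffr : ∀ a b c, rf a b → fr b c → co a c) :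
    let com : E → E → Prop := fun a b => rf a b ∨ co a b ∨ fr a b
    ∀ a b, Relation.TransGen com a b ↔
      (rf a b ∨ co a b ∨ fr a b ∨ relComp co rf a b ∨ relComp fr rf a b) := by
  intro com a b
  constructor
  · intro h
    induction h with
    | single h =>
      rcases h with h|h|h
      · exact Or.inl h
      · exact Or.inr (Or.inl h)
      · exact Or.inr (Or.inr (Or.inl h))
    | tail _ hbc ih =>
      rename_i m c _
      rcases ih with h|h|h|⟨x,hx,hxr⟩|⟨x,hx,hxr⟩
      · -- rf a m, m ∈ R
        rcases hbc with h2|h2|h2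
        · exact absurd ⟨(hrf _ _ h).2, (hrf _ _ h2).1⟩ (hdisj m)
        · exact absurd ⟨(hrf _ _ h).2, (hco _ _ h2).1⟩ (hdisj m)
        · exact Or.inr (Or.inl (hrffr _ _ _ h h2))
      · rcases hbc with h2|h2|h2
        · exact Or.inr (Or.inr (Or.inr (Or.inl ⟨m, h, h2⟩)))
        · exact Or.inr (Or.inl (hcoco _ _ _ h h2))
        · exact absurd ⟨(hfr _ _ h2).1, (hco _ _ h).2⟩ (hdisj m)
      · rcases hbc with h2|h2|h2
        · exact Or.inr (Or.inr (Or.inr (Or.inr ⟨m, h, h2⟩)))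
        · exact Or.inr (Or.inr (Or.inl (hfrco _ _ _ h h2)))
        · exact absurd ⟨(hfr _ _ h2).1, (hfr _ _ h).2⟩ (hdisj m)
      · rcases hbc with h2|h2|h2
        · exact absurd ⟨(hrf _ _ hxr).2, (hrf _ _ h2).1⟩ (hdisj m)
        · exact absurd ⟨(hrf _ _ hxr).2, (hco _ _ h2).1⟩ (hdisj m)
        · exact Or.inr (Or.inl (hcoco _ _ _ hx (hrffr _ _ _ hxr h2)))
      · rcases hbc with h2|h2|h2
        · exact absurd ⟨(hrf _ _ hxr).2, (hrf _ _ h2).1⟩ (hdisj m)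
        · exact absurd ⟨(hrf _ _ hxr).2, (hco _ _ h2).1⟩ (hdisj m)
        · exact Or.inr (Or.inr (Or.inl (hfrco _ _ _ hx (hrffr _ _ _ hxr h2))))
  · intro h
    rcases h with h|h|h|⟨x,hx,hxr⟩|⟨x,hx,hxr⟩
    · exact Relation.TransGen.single (Or.inl h)
    · exact Relation.TransGen.single (Or.inr (Or.inl h))
    · exact Relation.TransGen.single (Or.inr (Or.inr h))
    · exact Relation.TransGen.tail (Relation.TransGen.single (Or.inr (Or.inl hx))) (Or.inl hxr)
    · exact Relation.TransGen.tail (Relation.TransGen.single (Or.inr (Or.inr hx))) (Or.inl hxr)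
end

section
/- Monotonicity counterexample structure for Power/ARMv8: there exists a well-formed execution X with two singleton transactions {a} and {b} where (a,b) ∈ rmw, inconsistent due to the TxnCancelsRMW axiom empty(rmw ∩ tfence*), such that the execution Y obtained by coalescing the two transactions into one (stxn_Y = {a,b}² \ id ∪ id on {a,b}) satisfies TxnCancelsRMW; i.e., the axiom empty(rmw ∩ tfence*) is not monotone with respect to enlarging stxn. Formally: there exist relations po, rmw, stxn₁ ⊆ stxn₂ (as partial equivalence relations) on a two-element event set with rmw ∩ tfence(stxn₁)* ≠ ∅ but rmw ∩ tfence(stxn₂)* = ∅, where tfence(t) = po ∩ ((¬t;t) ∪ (t;¬t)). -/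
def tfence {E : Type*} (po stxn : E → E → Prop) : E → E → Prop :=
  fun a b => po a b ∧
    ((∃ c, ¬ stxn a c ∧ stxn c b) ∨ (∃ c, stxn a c ∧ ¬ stxn c b))

theorem txnCancelsRMW_not_monotone :
    ∃ po rmw stxn₁ stxn₂ : Bool → Bool → Prop,
      (∀ a b, stxn₁ a b → stxn₂ a b) ∧
      (∀ a b, stxn₁ a b → stxn₁ b a) ∧
      (∀ a b c, stxn₁ a b → stxn₁ b c → stxn₁ a c) ∧
      (∀ a b, stxn₂ a b → stxn₂ b a) ∧
      (∀ a b c, stxn₂ a b → stxn₂ b c → stxn₂ a c) ∧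
      -- rmw ∩ tfence(stxn₁)* is nonempty: the small-transaction execution is
      -- inconsistent under TxnCancelsRMW
      (∃ a b, rmw a b ∧ reflCl (tfence po stxn₁) a b) ∧
      -- rmw ∩ tfence(stxn₂)* is empty: coalescing makes it consistent
      (∀ a b, rmw a b → ¬ reflCl (tfence po stxn₂) a b) := by
  refine ⟨fun x y => x = false ∧ y = true, fun x y => x = false ∧ y = true,
    Eq, fun _ _ => True, ?_, ?_, ?_, ?_, ?_, ?_, ?_⟩
  · intros; trivial
  · intro a b h; exact h.symm
  · intro a b c h1 h2; exact h1.trans h2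
  · intros; trivial
  · intros; trivial
  · exact ⟨false, true, ⟨rfl, rfl⟩, Or.inl ⟨⟨rfl, rfl⟩,
      Or.inl ⟨true, by simp, rfl⟩⟩⟩
  · rintro a b ⟨rfl, rfl⟩ h
    rcases h with ⟨_, h | h⟩ | h
    · exact (h.choose_spec.1 trivial).elim
    · exact (h.choose_spec.2 trivial).elim
    · simp at h
end
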